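/- For every k ≥ 1, the torpid-mixing gadget H_k has at least 2^k matchings covering every vertex except x_1 and v, i.e., |N_{H_k}(x_1, v)| ≥ 2^k. -/

import Mathlib

/-- The number of perfect matchings of a graph, counted as the number of
subgraphs that are perfect matchings. -/
noncomputable def pmCount {V : Type*} (G : SimpleGraph V) : ℕ :=
  Nat.card {M : G.Subgraph // M.IsPerfectMatching}

/-- The number of near-perfect matchings of `G` with holes exactly at `u` and `v`,
i.e. matchings covering every vertex except `u` and `v`. -/
noncomputable def npCount {V : Type*} (G : SimpleGraph V) (u v : V) : ℕ :=
  Nat.card {M : G.Subgraph // M.IsMatching ∧ M.verts = Set.univ \ {u, v}}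

/-- The edge set of the chain-of-boxes gadget `B_k`, realized on the natural numbers:
the path vertices `v_0, …, v_{2k-1}` are `0, …, 2k-1`, and for `i < k` the extra
vertices are `a_i = 2k + 2i` and `b_i = 2k + 2i + 1`. -/
def boxEdges (k : ℕ) : Set (Sym2 ℕ) :=
  {e | ∃ j, j + 2 ≤ 2 * k ∧ e = s(j, j + 1)} ∪
  {e | ∃ i, i < k ∧ e = s(2 * i, 2 * k + 2 * i)} ∪
  {e | ∃ i, i < k ∧ e = s(2 * k + 2 * i, 2 * k + 2 * i + 1)} ∪
  {e | ∃ i, i < k ∧ e = s(2 * k + 2 * i + 1, 2 * i + 1)}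

/-- Relabelling of the vertices of a chain-of-boxes copy: the path endpoint
`v_0` (index `0`) is sent to `e0`, the path endpoint `v_{2k-1}` (index `2k-1`)
is sent to `e1`, and every other vertex `n` is sent to `base + n`. -/
def relabelBox (k e0 e1 base : ℕ) (n : ℕ) : ℕ :=
  if n = 0 then e0 else if n = 2 * k - 1 then e1 else base + n

/-- Edge set of the torpid-mixing gadget `H_k`, realized on ℕ.  The 12-cycle is
`a = 0, x₁ = 1, w₁ = 2, u = 3, w₂ = 4, x₂ = 5, b = 6, y₂ = 7, z₂ = 8, v = 9,
z₁ = 10, y₁ = 11` (in cyclic order), together with the chord `{a, b}` and four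
disjoint copies of the chain-of-boxes gadget `B_k` whose path endpoints
`(v_0, v_{2k-1})` are identified with `(w₁, a)`, `(a, z₁)`, `(w₂, b)`, `(b, z₂)`
respectively; the internal vertices of the `j`-th copy are relabelled into the
range starting at `12 + 4kj`. -/
def gadgetEdges (k : ℕ) : Set (Sym2 ℕ) :=
  {e | ∃ i, i < 12 ∧ e = s(i, (i + 1) % 12)} ∪ {s(0, 6)} ∪
  Sym2.map (relabelBox k 2 0 12) '' boxEdges k ∪
  Sym2.map (relabelBox k 0 10 (12 + 4 * k)) '' boxEdges k ∪
  Sym2.map (relabelBox k 4 6 (12 + 8 * k)) '' boxEdges k ∪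
  Sym2.map (relabelBox k 6 8 (12 + 12 * k)) '' boxEdges k

/-- Vertex set of the torpid-mixing gadget `H_k`: the 12 cycle vertices together
with the internal (non-endpoint) vertices of the four chain-of-boxes copies. -/
def gadgetVerts (k : ℕ) : Set ℕ :=
  {n | n < 12} ∪
  {m | ∃ j, j < 4 ∧ ∃ n, 0 < n ∧ n < 4 * k ∧ n ≠ 2 * k - 1 ∧ m = 12 + 4 * k * j + n}

/-- The torpid-mixing gadget `H_k`. -/
def gadgetGraph (k : ℕ) : SimpleGraph (gadgetVerts k) :=
  (SimpleGraph.fromEdgeSet (gadgetEdges k)).induce (gadgetVerts k)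

/-!
With holes at `x₁` and `v`, the rest of the 12-cycle is matched by `{u, w₂}`, `{x₂, b}`,
`{y₂, z₂}`, `{z₁, y₁}`.  The copies of `B_k` at `(a, z₁)`, `(w₂, b)`, `(b, z₂)` are then matched
internally, by the path edges `{v_{2i+1}, v_{2i+2}}` and the edges `{a_i, b_i}`, while the copy
at `(w₁, a)` covers both its endpoints, box by box, either with the two rungs
`{v_{2i}, a_i}`, `{v_{2i+1}, b_i}` or with `{v_{2i}, v_{2i+1}}`, `{a_i, b_i}`.  The `2^k`
independent choices give `2^k` distinct matchings.
-/

namespace SimpleGraph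

variable {V W : Type*} {G : SimpleGraph V} {H : SimpleGraph W} {S T : Set V} {f g : V → V}

/-- A perfect matching of `G` on `S`, encoded by the partner function `f`. -/
def IsPairingOn (G : SimpleGraph V) (S : Set V) (f : V → V) : Prop :=
  ∀ x ∈ S, f x ∈ S ∧ f (f x) = x ∧ G.Adj x (f x)

namespace IsPairingOn

lemma union (hS : G.IsPairingOn S f) (hT : G.IsPairingOn T f) : G.IsPairingOn (S ∪ T) f := by
  rintro x (hx | hx)
  · obtain ⟨hfx, hff, hadj⟩ := hS x hx
    exact ⟨Or.inl hfx, hff, hadj⟩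
  · obtain ⟨hfx, hff, hadj⟩ := hT x hx
    exact ⟨Or.inr hfx, hff, hadj⟩

lemma congr (hf : G.IsPairingOn S f) (hfg : Set.EqOn f g S) : G.IsPairingOn S g := by
  intro x hx
  obtain ⟨hfx, hff, hadj⟩ := hf x hx
  rw [← hfg hx, ← hfg hfx]
  exact ⟨hfx, hff, hadj⟩

lemma image (φ : G →g H) {F : W → W} (hf : G.IsPairingOn S f)
    (hF : ∀ x ∈ S, F (φ x) = φ (f x)) : H.IsPairingOn (φ '' S) F := by
  rintro _ ⟨x, hx, rfl⟩
  obtain ⟨hfx, hff, hadj⟩ := hf x hx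
  rw [hF x hx, hF _ hfx, hff]
  exact ⟨Set.mem_image_of_mem φ hfx, rfl, φ.map_adj hadj⟩

end IsPairingOn

def pairingSubgraph (G : SimpleGraph V) (T S : Set V) (f : V → V) : (G.induce T).Subgraph where
  verts := {x : T | (x : V) ∈ S}
  Adj x y := G.Adj x y ∧ (x : V) ∈ S ∧ (y : V) ∈ S ∧ f x = y ∧ f y = x
  adj_sub h := h.1
  edge_vert h := h.2.1
  symm := ⟨fun _ _ h => ⟨h.1.symm, h.2.2.1, h.2.1, h.2.2.2.2, h.2.2.2.1⟩⟩

@[simp]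
lemma pairingSubgraph_verts : (G.pairingSubgraph T S f).verts = {x : T | (x : V) ∈ S} :=
  rfl

lemma pairingSubgraph_adj {x y : T} : (G.pairingSubgraph T S f).Adj x y ↔
    G.Adj x y ∧ (x : V) ∈ S ∧ (y : V) ∈ S ∧ f x = y ∧ f y = x :=
  Iff.rfl

lemma IsPairingOn.isMatching_pairingSubgraph (hf : G.IsPairingOn S f) (hST : S ⊆ T) :
    (G.pairingSubgraph T S f).IsMatching := by
  intro x (hx : (x : V) ∈ S)
  obtain ⟨hfx, hff, hadj⟩ := hf x hx
  refine ⟨⟨f x, hST hfx⟩, pairingSubgraph_adj.2 ⟨hadj, hx, hfx, rfl, hff⟩, fun y hy => ?_⟩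
  exact Subtype.ext (pairingSubgraph_adj.1 hy).2.2.2.1.symm

lemma IsPairingOn.eqOn_of_pairingSubgraph_eq (hf : G.IsPairingOn S f) (hST : S ⊆ T)
    (h : G.pairingSubgraph T S f = G.pairingSubgraph T S g) : Set.EqOn f g S := by
  intro x hx
  obtain ⟨hfx, hff, hadj⟩ := hf x hx
  have hxf : (G.pairingSubgraph T S f).Adj ⟨x, hST hx⟩ ⟨f x, hST hfx⟩ :=
    pairingSubgraph_adj.2 ⟨hadj, hx, hfx, rfl, hff⟩
  rw [h] at hxf
  exact (pairingSubgraph_adj.1 hxf).2.2.2.1.symm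

def fromEdgeSetHom {α β : Type*} {E : Set (Sym2 α)} {E' : Set (Sym2 β)} (g : α → β)
    (hg : Function.Injective g) (hE : Set.MapsTo (Sym2.map g) E E') :
    fromEdgeSet E →g fromEdgeSet E' where
  toFun := g
  map_rel' h :=
    (fromEdgeSet_adj _).2 ⟨hE ((fromEdgeSet_adj _).1 h).1, hg.ne ((fromEdgeSet_adj _).1 h).2⟩

end SimpleGraph

open SimpleGraph

/-- Arithmetic form of the edges of `B_k`: the path edges `{j, j + 1}`, the edges
`{a_i, b_i} = {2k + 2i, 2k + 2i + 1}`, and the rungs `{n, n + 2k}`, which are the edges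
`{v_{2i}, a_i}` and `{v_{2i+1}, b_i}`. -/
def BoxAdj (k a b : ℕ) : Prop :=
  b = a + 1 ∧ (a + 2 ≤ 2 * k ∨ 2 * k ≤ a ∧ a < 4 * k ∧ a % 2 = 0) ∨ a < 2 * k ∧ b = a + 2 * k

lemma adj_of_boxAdj {k a b : ℕ} (h : BoxAdj k a b ∨ BoxAdj k b a) :
    (fromEdgeSet (boxEdges k)).Adj a b := by
  suffices key : ∀ a b, BoxAdj k a b → (fromEdgeSet (boxEdges k)).Adj a b from
    h.elim (key a b) fun h => (key b a h).symm
  intro a b hab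
  refine (fromEdgeSet_adj _).2 ⟨?_, by unfold BoxAdj at hab; omega⟩
  rcases hab with ⟨rfl, hpath | hbox⟩ | ⟨ha, rfl⟩
  · exact Or.inl (Or.inl (Or.inl ⟨a, hpath, rfl⟩))
  · exact Or.inl (Or.inr ⟨(a - 2 * k) / 2, by omega, Sym2.eq_iff.2 (by omega)⟩)
  · rcases Nat.even_or_odd' a with ⟨i, rfl | rfl⟩
    · exact Or.inl (Or.inl (Or.inr ⟨i, by omega, Sym2.eq_iff.2 (by omega)⟩))
    · exact Or.inr ⟨i, by omega, Sym2.eq_iff.2 (by omega)⟩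

def boxIndex (k n : ℕ) : ℕ := if n < 2 * k then n / 2 else (n - 2 * k) / 2

/-- The perfect matching of `B_k` that uses the rungs `{v_{2i}, a_i}`, `{v_{2i+1}, b_i}` in the
boxes `i ∈ s` and the edges `{v_{2i}, v_{2i+1}}`, `{a_i, b_i}` in the others
(`n + 1 - 2 * (n % 2)` flips the last bit of `n`). -/
def boxPairing (k : ℕ) (s : Finset ℕ) (n : ℕ) : ℕ :=
  if boxIndex k n ∈ s then (if n < 2 * k then n + 2 * k else n - 2 * k)
  else n + 1 - 2 * (n % 2)

variable {k : ℕ}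

lemma boxIndex_boxPairing (s : Finset ℕ) {n : ℕ} (hn : n < 4 * k) :
    boxIndex k (boxPairing k s n) = boxIndex k n := by
  unfold boxPairing
  split_ifs <;> unfold boxIndex <;> split_ifs <;> omega

lemma boxPairing_isPairingOn (s : Finset ℕ) :
    (fromEdgeSet (boxEdges k)).IsPairingOn (Set.Iio (4 * k)) (boxPairing k s) := by
  intro n (hn : n < 4 * k)
  refine ⟨?_, ?_, adj_of_boxAdj ?_⟩
  · show boxPairing k s n < 4 * k
    unfold boxPairing
    split_ifs <;> omega
  · rw [boxPairing.eq_1 k s (boxPairing k s n), boxIndex_boxPairing s hn]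
    unfold boxPairing
    split_ifs <;> omega
  · unfold boxPairing BoxAdj
    split_ifs <;> omega

lemma boxPairing_two_mul (s : Finset ℕ) {i : ℕ} (hi : i < k) :
    boxPairing k s (2 * i) = if i ∈ s then 2 * i + 2 * k else 2 * i + 1 := by
  have hidx : boxIndex k (2 * i) = i := by unfold boxIndex; split_ifs <;> omega
  unfold boxPairing
  rw [hidx]
  split_ifs <;> omega

def boxInner (k : ℕ) : Set ℕ := {n | 0 < n ∧ n < 4 * k ∧ n ≠ 2 * k - 1}

/-- The perfect matching of `B_k - {v_0, v_{2k-1}}` formed by the path edges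
`{v_{2i+1}, v_{2i+2}}` and the edges `{a_i, b_i}`. -/
def boxInnerPairing (k n : ℕ) : ℕ :=
  if n < 2 * k then n + 2 * (n % 2) - 1 else n + 1 - 2 * (n % 2)

lemma boxInnerPairing_isPairingOn :
    (fromEdgeSet (boxEdges k)).IsPairingOn (boxInner k) (boxInnerPairing k) := by
  rintro n ⟨hn0, hn, hne⟩
  refine ⟨?_, ?_, adj_of_boxAdj ?_⟩
  · show 0 < _ ∧ _ < 4 * k ∧ _ ≠ 2 * k - 1
    unfold boxInnerPairing
    split_ifs <;> omega
  · unfold boxInnerPairing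
    split_ifs <;> omega
  · unfold boxInnerPairing BoxAdj
    split_ifs <;> omega

lemma relabelBox_injective {e0 e1 base : ℕ} (hk : 1 ≤ k) (he : e0 ≠ e1) (h0 : e0 ≤ base)
    (h1 : e1 ≤ base) : Function.Injective (relabelBox k e0 e1 base) := by
  intro m n h
  unfold relabelBox at h
  split_ifs at h <;> omega

lemma relabelBox_eq_add {e0 e1 base n : ℕ} (h0 : n ≠ 0) (h1 : n ≠ 2 * k - 1) :
    relabelBox k e0 e1 base n = base + n := by
  rw [relabelBox, if_neg h0, if_neg h1]

/-- The pairs `{u, w₂}`, `{x₂, b}`, `{y₂, z₂}`, `{z₁, y₁}` of the 12-cycle. -/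
def cyclePairing : ℕ → ℕ
  | 3 => 4 | 4 => 3 | 5 => 6 | 6 => 5 | 7 => 8 | 8 => 7 | 10 => 11 | 11 => 10 | x => x

/-- `boxPairing k s` on the copy of `B_k` between `w₁` and `a`, `cyclePairing` on the rest of the
12-cycle, and `boxInnerPairing` on the other three copies (the last branch sends
`12 + 4kj + n` to `12 + 4kj + boxInnerPairing k n`). -/
def gadgetPairing (k : ℕ) (s : Finset ℕ) (x : ℕ) : ℕ :=
  if x = 0 then relabelBox k 2 0 12 (boxPairing k s (2 * k - 1))
  else if x = 2 then relabelBox k 2 0 12 (boxPairing k s 0)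
  else if x < 12 then cyclePairing x
  else if x < 12 + 4 * k then relabelBox k 2 0 12 (boxPairing k s (x - 12))
  else x - (x - 12) % (4 * k) + boxInnerPairing k ((x - 12) % (4 * k))

lemma adj_cycle_succ {i j : ℕ} (hi : i < 12) (hj : j = (i + 1) % 12) :
    (fromEdgeSet (gadgetEdges k)).Adj i j :=
  (fromEdgeSet_adj _).2
    ⟨hj ▸ Or.inl (Or.inl (Or.inl (Or.inl (Or.inl ⟨i, hi, rfl⟩)))), by omega⟩

lemma cyclePairing_isPairingOn :
    (fromEdgeSet (gadgetEdges k)).IsPairingOn {3, 4, 5, 6, 7, 8, 10, 11} cyclePairing := by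
  intro x hx
  simp only [Set.mem_insert_iff, Set.mem_singleton_iff] at hx
  rcases hx with rfl | rfl | rfl | rfl | rfl | rfl | rfl | rfl <;>
    refine ⟨by simp [cyclePairing], rfl, ?_⟩ <;>
    first
    | exact adj_cycle_succ (by decide) rfl
    | exact SimpleGraph.Adj.symm (adj_cycle_succ (by decide) rfl)

lemma gadgetPairing_eqOn_cycle (s : Finset ℕ) :
    Set.EqOn (gadgetPairing k s) cyclePairing {3, 4, 5, 6, 7, 8, 10, 11} := by
  intro x hx
  simp only [Set.mem_insert_iff, Set.mem_singleton_iff] at hx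
  rw [gadgetPairing, if_neg (by omega), if_neg (by omega), if_pos (by omega)]

lemma gadgetPairing_relabelBox_first (s : Finset ℕ) {n : ℕ} (hn : n < 4 * k) :
    gadgetPairing k s (relabelBox k 2 0 12 n) = relabelBox k 2 0 12 (boxPairing k s n) := by
  by_cases h0 : n = 0
  · subst h0
    rfl
  by_cases h1 : n = 2 * k - 1
  · rw [relabelBox, if_neg h0, if_pos h1, gadgetPairing, if_pos rfl, h1]
  rw [relabelBox_eq_add h0 h1, gadgetPairing, if_neg (by omega), if_neg (by omega),
    if_neg (by omega), if_pos (by omega), Nat.add_sub_cancel_left]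

lemma gadgetPairing_relabelBox_copy (s : Finset ℕ) {e0 e1 base j n : ℕ} (hj : 1 ≤ j)
    (hbase : base = 12 + 4 * k * j) (hn : n ∈ boxInner k) :
    gadgetPairing k s (relabelBox k e0 e1 base n) =
      relabelBox k e0 e1 base (boxInnerPairing k n) := by
  subst hbase
  obtain ⟨hn0, hn4, hne⟩ := hn
  obtain ⟨hr0, -, hrne⟩ := (boxInnerPairing_isPairingOn (k := k) n ⟨hn0, hn4, hne⟩).1
  have hjk : 4 * k ≤ 4 * k * j := Nat.le_mul_of_pos_right _ hj
  have hmod : (12 + 4 * k * j + n - 12) % (4 * k) = n := by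
    rw [show 12 + 4 * k * j + n - 12 = 4 * k * j + n by omega, Nat.mul_add_mod,
      Nat.mod_eq_of_lt hn4]
  rw [relabelBox_eq_add (by omega) hne, relabelBox_eq_add (by omega) hrne, gadgetPairing,
    if_neg (by omega), if_neg (by omega), if_neg (by omega), if_neg (by omega), hmod]
  omega

def gadgetPieces (k : ℕ) : Set ℕ :=
  {3, 4, 5, 6, 7, 8, 10, 11} ∪ relabelBox k 2 0 12 '' Set.Iio (4 * k) ∪
    relabelBox k 0 10 (12 + 4 * k) '' boxInner k ∪ relabelBox k 4 6 (12 + 8 * k) '' boxInner k ∪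
    relabelBox k 6 8 (12 + 12 * k) '' boxInner k

lemma gadgetVerts_diff_subset_gadgetPieces (hk : 1 ≤ k) :
    gadgetVerts k \ {1, 9} ⊆ gadgetPieces k := by
  simp only [gadgetPieces, Set.subset_def, Set.mem_sdiff, Set.mem_union, Set.mem_image,
    Set.mem_insert_iff, Set.mem_singleton_iff, not_or]
  rintro x ⟨hx | ⟨j, hj, n, hn0, hn4, hne, rfl⟩, hx1, hx9⟩
  · rw [Set.mem_ofPred_eq] at hx
    interval_cases x
    · refine Or.inl (Or.inl (Or.inl (Or.inr ⟨2 * k - 1, by simp; omega, ?_⟩)))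
      rw [relabelBox, if_neg (by omega), if_pos rfl]
    · exact absurd rfl hx1
    · exact Or.inl (Or.inl (Or.inl (Or.inr ⟨0, by simp; omega, rfl⟩)))
    all_goals first
      | exact absurd rfl hx9
      | exact Or.inl (Or.inl (Or.inl (Or.inl (by norm_num))))
  · have hn : n ∈ boxInner k := ⟨hn0, hn4, hne⟩
    interval_cases j
    · refine Or.inl (Or.inl (Or.inl (Or.inr ⟨n, hn4, ?_⟩)))
      rw [relabelBox_eq_add (by omega) hne]; ring
    · refine Or.inl (Or.inl (Or.inr ⟨n, hn, ?_⟩))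
      rw [relabelBox_eq_add (by omega) hne]; ring
    · refine Or.inl (Or.inr ⟨n, hn, ?_⟩)
      rw [relabelBox_eq_add (by omega) hne]; ring
    · refine Or.inr ⟨n, hn, ?_⟩
      rw [relabelBox_eq_add (by omega) hne]; ring

lemma gadgetPieces_subset_gadgetVerts_diff : gadgetPieces k ⊆ gadgetVerts k \ {1, 9} := by
  simp only [gadgetPieces, Set.subset_def, Set.mem_sdiff, Set.mem_union, Set.mem_image,
    Set.mem_insert_iff, Set.mem_singleton_iff, not_or]
  rintro _ ((((hx | ⟨n, hn, rfl⟩) | ⟨n, ⟨hn0, hn4, hne⟩, rfl⟩) | ⟨n, ⟨hn0, hn4, hne⟩, rfl⟩) |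
    ⟨n, ⟨hn0, hn4, hne⟩, rfl⟩)
  · rcases hx with rfl | rfl | rfl | rfl | rfl | rfl | rfl | rfl <;>
      exact ⟨Or.inl (by norm_num), by norm_num, by norm_num⟩
  · rw [Set.mem_Iio] at hn
    unfold relabelBox
    split_ifs with h0 h1
    · exact ⟨Or.inl (by norm_num), by norm_num, by norm_num⟩
    · exact ⟨Or.inl (by norm_num), by norm_num, by norm_num⟩
    · exact ⟨Or.inr ⟨0, by norm_num, n, by omega, hn, h1, by ring⟩, by omega, by omega⟩
  · rw [relabelBox_eq_add (by omega) hne]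
    exact ⟨Or.inr ⟨1, by norm_num, n, hn0, hn4, hne, by ring⟩, by omega, by omega⟩
  · rw [relabelBox_eq_add (by omega) hne]
    exact ⟨Or.inr ⟨2, by norm_num, n, hn0, hn4, hne, by ring⟩, by omega, by omega⟩
  · rw [relabelBox_eq_add (by omega) hne]
    exact ⟨Or.inr ⟨3, by norm_num, n, hn0, hn4, hne, by ring⟩, by omega, by omega⟩

lemma gadgetPairing_isPairingOn_copy (hk : 1 ≤ k) (s : Finset ℕ) {e0 e1 base : ℕ} (j : ℕ)
    (he : e0 ≠ e1) (h0 : e0 ≤ base) (h1 : e1 ≤ base) (hj : 1 ≤ j)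
    (hbase : base = 12 + 4 * k * j)
    (hE : Set.MapsTo (Sym2.map (relabelBox k e0 e1 base)) (boxEdges k) (gadgetEdges k)) :
    (fromEdgeSet (gadgetEdges k)).IsPairingOn (relabelBox k e0 e1 base '' boxInner k)
      (gadgetPairing k s) :=
  boxInnerPairing_isPairingOn.image (fromEdgeSetHom _ (relabelBox_injective hk he h0 h1) hE)
    fun _ hn => gadgetPairing_relabelBox_copy s hj hbase hn

lemma gadgetPairing_isPairingOn (hk : 1 ≤ k) (s : Finset ℕ) :
    (fromEdgeSet (gadgetEdges k)).IsPairingOn (gadgetVerts k \ {1, 9}) (gadgetPairing k s) := by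
  rw [(gadgetVerts_diff_subset_gadgetPieces hk).antisymm gadgetPieces_subset_gadgetVerts_diff]
  refine ((((cyclePairing_isPairingOn.congr (gadgetPairing_eqOn_cycle s).symm).union ?_).union
    (gadgetPairing_isPairingOn_copy hk s 1 (by norm_num) (by omega) (by omega) le_rfl (by ring)
      fun e he => Or.inl (Or.inl (Or.inr ⟨e, he, rfl⟩)))).union
    (gadgetPairing_isPairingOn_copy hk s 2 (by norm_num) (by omega) (by omega) (by norm_num)
      (by ring)
      fun e he => Or.inl (Or.inr ⟨e, he, rfl⟩))).union
    (gadgetPairing_isPairingOn_copy hk s 3 (by norm_num) (by omega) (by omega) (by norm_num)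
      (by ring)
      fun e he => Or.inr ⟨e, he, rfl⟩)
  exact (boxPairing_isPairingOn s).image
    (fromEdgeSetHom _ (relabelBox_injective hk (by norm_num) (by norm_num) (by norm_num))
      fun e he => Or.inl (Or.inl (Or.inl (Or.inr ⟨e, he, rfl⟩))))
    fun _ hn => gadgetPairing_relabelBox_first s hn

lemma eq_of_eqOn_gadgetPairing (hk : 1 ≤ k) {s t : Finset ℕ} (hs : s ⊆ Finset.range k)
    (ht : t ⊆ Finset.range k)
    (h : Set.EqOn (gadgetPairing k s) (gadgetPairing k t) (gadgetVerts k \ {1, 9})) : s = t := by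
  ext i
  by_cases hi : i < k
  · have h2i : 2 * i < 4 * k := by omega
    have hbox := h (gadgetPieces_subset_gadgetVerts_diff
      (Or.inl (Or.inl (Or.inl (Or.inr ⟨2 * i, h2i, rfl⟩)))))
    rw [gadgetPairing_relabelBox_first s h2i, gadgetPairing_relabelBox_first t h2i,
      (relabelBox_injective hk (by norm_num) (by norm_num) (by norm_num)).eq_iff,
      boxPairing_two_mul s hi, boxPairing_two_mul t hi] at hbox
    split_ifs at hbox with hsi hti hti <;> simp only [hsi, hti] <;> omega
  · have hs' : i ∉ s := fun h => hi (Finset.mem_range.1 (hs h))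
    have ht' : i ∉ t := fun h => hi (Finset.mem_range.1 (ht h))
    simp only [hs', ht']

lemma gadgetVerts_finite (k : ℕ) : (gadgetVerts k).Finite := by
  refine (Set.finite_Iio (12 + 16 * k)).subset ?_
  rintro x (hx | ⟨j, hj, n, -, hn, -, rfl⟩)
  · exact Set.mem_Iio.2 (by rw [Set.mem_ofPred_eq] at hx; omega)
  · have : 4 * k * j ≤ 4 * k * 3 := Nat.mul_le_mul_left _ (by omega)
    exact Set.mem_Iio.2 (by omega)

/-- For every `k ≥ 1`, the torpid-mixing gadget `H_k` has at least `2^k` matchings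
covering every vertex except `x₁` (vertex `1`) and `v` (vertex `9`), i.e.
`|N_{H_k}(x₁, v)| ≥ 2^k`. -/
theorem gadgetGraph_npCount_x1_v (k : ℕ) (hk : 1 ≤ k) :
    2 ^ k ≤ npCount (gadgetGraph k)
      ⟨1, Or.inl (by norm_num)⟩
      ⟨9, Or.inl (by norm_num)⟩ := by
  have := (gadgetVerts_finite k).to_subtype
  have hS : gadgetVerts k \ {1, 9} ⊆ gadgetVerts k := Set.sdiff_subset
  let M (s : (Finset.range k).powerset) : {M : (gadgetGraph k).Subgraph //
      M.IsMatching ∧ M.verts = Set.univ \ {⟨1, Or.inl (by norm_num)⟩, ⟨9, Or.inl (by norm_num)⟩}} :=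
    ⟨(fromEdgeSet (gadgetEdges k)).pairingSubgraph _ _ (gadgetPairing k s),
      (gadgetPairing_isPairingOn hk s).isMatching_pairingSubgraph hS, by
        ext x; simp [Subtype.ext_iff]⟩
  have hM : Function.Injective M := fun s t hst => Subtype.ext <| eq_of_eqOn_gadgetPairing hk
    (Finset.mem_powerset.1 s.2) (Finset.mem_powerset.1 t.2)
    ((gadgetPairing_isPairingOn hk s).eqOn_of_pairingSubgraph_eq hS (congrArg Subtype.val hst))
  calc 2 ^ k = Nat.card (Finset.range k).powerset := by
        rw [Nat.card_eq_finsetCard, Finset.card_powerset, Finset.card_range]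
    _ ≤ _ := Nat.card_le_card_of_injective M hM
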